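/- Define L_1 := U_7(A) where A = J_2^2 J_{49}^3/(q^2 J_1^3 J_{98}) and U_7 extracts every 7th coefficient of a formal Laurent series in q. Then, with J_k = (q^k;q^k)_\infty, one has the identity of formal power series L_1 = (J_7^3/J_{14}) \sum_{n\ge 0} a(7n+2) q^n, where a(n) is defined by \sum_{n\ge 0} a(n)q^n = (-q;q)_\infty^2/(q;q)_\infty. -/

import Mathlib

/-- `J_k = (q^k;q^k)_∞` as a formal power series over `ℚ`. -/
noncomputable def J (k : ℕ) : PowerSeries ℚ :=
  PowerSeries.mk fun m =>
    PowerSeries.coeff m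
      (∏ n ∈ Finset.range (m + 1), (1 - (PowerSeries.X : PowerSeries ℚ) ^ (k * (n + 1))))

/-- `J_k` viewed as a formal Laurent series. -/
noncomputable def JL (k : ℕ) : LaurentSeries ℚ := (J k : LaurentSeries ℚ)

/-- The variable `q` as a Laurent series. -/
noncomputable def q : LaurentSeries ℚ := ((PowerSeries.X : PowerSeries ℚ) : LaurentSeries ℚ)

/-- The Atkin operator `U_p` on formal Laurent series:
`U_p(∑ a(m) q^m) = ∑ a(pm) q^m` (defined to be `0` when `p = 0`). -/
noncomputable def atkinU (p : ℕ) (f : LaurentSeries ℚ) : LaurentSeries ℚ where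
  coeff m := if p = 0 then 0 else f.coeff ((p : ℤ) * m)
  isPWO_support' := by
    by_cases hp : p = 0
    · simp [hp]
    · have hp1 : (1 : ℤ) ≤ (p : ℤ) := by exact_mod_cast Nat.one_le_iff_ne_zero.mpr hp
      refine Set.isPWO_iff_isWF.mpr (BddBelow.wellFoundedOn_lt ⟨min f.order 0, ?_⟩)
      intro m hm
      simp only [Function.mem_support, hp, if_false] at hm
      by_contra hlt
      push_neg at hlt
      have hm0 : m < 0 := lt_of_lt_of_le hlt (min_le_right _ _)
      have hmo : m < f.order := lt_of_lt_of_le hlt (min_le_left _ _)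
      have hpm : (p : ℤ) * m ≤ m := by nlinarith
      exact hm (HahnSeries.coeff_eq_zero_of_lt_order (lt_of_le_of_lt hpm hmo))

/-- The Hauptmodul `t = q J₇⁴ / J₁⁴` as a formal Laurent series. -/
noncomputable def t : LaurentSeries ℚ := q * JL 7 ^ 4 / JL 1 ^ 4

/-- The eta quotient `A = J₂² J₄₉³ / (q² J₁³ J₉₈)`. -/
noncomputable def A : LaurentSeries ℚ := JL 2 ^ 2 * JL 49 ^ 3 / (q ^ 2 * JL 1 ^ 3 * JL 98)

/-- `(-q;q)_∞` as a formal power series over `ℚ`. -/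
noncomputable def negqPochhammer : PowerSeries ℚ :=
  PowerSeries.mk fun m =>
    PowerSeries.coeff m
      (∏ n ∈ Finset.range (m + 1), (1 + (PowerSeries.X : PowerSeries ℚ) ^ (n + 1)))


open PowerSeries


noncomputable def Pk (k N : ℕ) : PowerSeries ℚ :=
  ∏ n ∈ Finset.range N, (1 - (PowerSeries.X : PowerSeries ℚ) ^ (k * (n + 1)))

noncomputable def Qk (N : ℕ) : PowerSeries ℚ :=
  ∏ n ∈ Finset.range N, (1 + (PowerSeries.X : PowerSeries ℚ) ^ (n + 1))

lemma coeff_mul_one_sub_pow (F : PowerSeries ℚ) (s m : ℕ) :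
    PowerSeries.coeff m (F * (1 - X ^ s)) =
      PowerSeries.coeff m F - (if s ≤ m then PowerSeries.coeff (m - s) F else 0) := by
  rw [mul_sub, mul_one, map_sub, PowerSeries.coeff_mul_X_pow']

lemma coeff_mul_one_add_pow (F : PowerSeries ℚ) (s m : ℕ) :
    PowerSeries.coeff m (F * (1 + X ^ s)) =
      PowerSeries.coeff m F + (if s ≤ m then PowerSeries.coeff (m - s) F else 0) := by
  rw [mul_add, mul_one, map_add, PowerSeries.coeff_mul_X_pow']

lemma coeff_Pk_stable {k : ℕ} (hk : 1 ≤ k) (m : ℕ) :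
    ∀ N, m ≤ N → PowerSeries.coeff m (Pk k N) = PowerSeries.coeff m (Pk k m) := by
  intro N
  induction N with
  | zero => intro h; simp only [Nat.le_zero] at h; subst h; rfl
  | succ N ih =>
      intro h
      rcases Nat.lt_or_ge m (N + 1) with h1 | h2
      · have hm : m ≤ N := by omega
        rw [Pk, Finset.prod_range_succ, ← Pk, coeff_mul_one_sub_pow, if_neg (by nlinarith), sub_zero,
          ih hm]
      · have : m = N + 1 := by omega
        subst this; rfl

lemma coeff_Qk_stable (m : ℕ) :
    ∀ N, m ≤ N → PowerSeries.coeff m (Qk N) = PowerSeries.coeff m (Qk m) := by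
  intro N
  induction N with
  | zero => intro h; simp only [Nat.le_zero] at h; subst h; rfl
  | succ N ih =>
      intro h
      rcases Nat.lt_or_ge m (N + 1) with h1 | h2
      · have hm : m ≤ N := by omega
        rw [Qk, Finset.prod_range_succ, ← Qk, coeff_mul_one_add_pow, if_neg (by omega), add_zero,
          ih hm]
      · have : m = N + 1 := by omega
        subst this; rfl

lemma coeff_J {k : ℕ} (hk : 1 ≤ k) (m N : ℕ) (hN : m ≤ N) :
    PowerSeries.coeff m (J k) = PowerSeries.coeff m (Pk k N) := by
  rw [J, PowerSeries.coeff_mk, coeff_Pk_stable hk m N hN,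
    ← coeff_Pk_stable hk m (m + 1) (Nat.le_succ m)]
  rfl

lemma coeff_negq (m N : ℕ) (hN : m ≤ N) :
    PowerSeries.coeff m negqPochhammer = PowerSeries.coeff m (Qk N) := by
  rw [negqPochhammer, PowerSeries.coeff_mk, coeff_Qk_stable m N hN,
    ← coeff_Qk_stable m (m + 1) (Nat.le_succ m)]
  rfl

lemma J1_mul_negq : J 1 * negqPochhammer = J 2 := by
  ext m
  rw [PowerSeries.coeff_mul]
  have : ∀ p ∈ Finset.HasAntidiagonal.antidiagonal m,
      PowerSeries.coeff p.1 (J 1) * PowerSeries.coeff p.2 negqPochhammer =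
      PowerSeries.coeff p.1 (Pk 1 m) * PowerSeries.coeff p.2 (Qk m) := by
    intro p hp
    rw [Finset.HasAntidiagonal.mem_antidiagonal] at hp
    rw [coeff_J le_rfl p.1 m (by omega), coeff_negq p.2 m (by omega)]
  rw [Finset.sum_congr rfl this, ← PowerSeries.coeff_mul, coeff_J (k := 2) (by norm_num) m m le_rfl]
  congr 1
  rw [Pk, Qk, Pk, ← Finset.prod_mul_distrib]
  refine Finset.prod_congr rfl fun n _ => ?_
  ring_nf

lemma aer (k : ℕ) : ∀ N : ℕ,
    (∀ m, ¬ (7 ∣ m) → PowerSeries.coeff m (Pk (7 * k) N) = 0) ∧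
    (∀ m, PowerSeries.coeff (7 * m) (Pk (7 * k) N) = PowerSeries.coeff m (Pk k N)) := by
  intro N
  induction N with
  | zero =>
      constructor
      · intro m hm
        have hm0 : m ≠ 0 := by omega
        simp [Pk, PowerSeries.coeff_one, hm0]
      · intro m
        rcases Nat.eq_zero_or_pos m with h | h
        · simp [h, Pk]
        · have h1 : 7 * m ≠ 0 := by omega
          have h2 : m ≠ 0 := by omega
          simp [Pk, PowerSeries.coeff_one, h1, h2]
  | succ N ih =>
      have hP : ∀ c : ℕ, Pk c (N + 1) = Pk c N * (1 - X ^ (c * (N + 1))) := by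
        intro c; rw [Pk, Finset.prod_range_succ, ← Pk]
      have hmulassoc : 7 * k * (N + 1) = 7 * (k * (N + 1)) := by ring
      constructor
      · intro m hm
        rw [hP, coeff_mul_one_sub_pow, ih.1 m hm, hmulassoc]
        split_ifs with h
        · rw [ih.1 (m - 7 * (k * (N + 1))) (by omega), sub_zero]
        · simp
      · intro m
        rw [hP, hP, coeff_mul_one_sub_pow, coeff_mul_one_sub_pow, ih.2 m, hmulassoc]
        congr 1
        by_cases h : k * (N + 1) ≤ m
        · rw [if_pos (by omega : 7 * (k * (N + 1)) ≤ 7 * m), if_pos h]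
          have he : 7 * m - 7 * (k * (N + 1)) = 7 * (m - k * (N + 1)) := by omega
          rw [he, ih.2]
        · rw [if_neg (by omega : ¬ 7 * (k * (N + 1)) ≤ 7 * m), if_neg h]

lemma coeff_J7_not_dvd {k : ℕ} (hk : 1 ≤ k) {m : ℕ} (hm : ¬ (7 ∣ m)) :
    PowerSeries.coeff m (J (7 * k)) = 0 := by
  rw [coeff_J (by nlinarith) m m le_rfl, (aer k m).1 m hm]

lemma coeff_J7_dvd {k : ℕ} (hk : 1 ≤ k) (m : ℕ) :
    PowerSeries.coeff (7 * m) (J (7 * k)) = PowerSeries.coeff m (J k) := by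
  rw [coeff_J (by nlinarith) (7 * m) (7 * m) le_rfl, (aer k (7 * m)).2 m,
    ← coeff_J hk m (7 * m) (by omega)]

lemma coeff_J_zero {k : ℕ} (hk : 1 ≤ k) : PowerSeries.coeff 0 (J k) = 1 := by
  rw [J, PowerSeries.coeff_mk]
  simp [PowerSeries.coeff_zero_eq_constantCoeff]
  omega

lemma atkinU_coeff (f : LaurentSeries ℚ) (m : ℤ) :
    (atkinU 7 f).coeff m = f.coeff (7 * m) := by
  show (if (7 : ℕ) = 0 then 0 else f.coeff (((7 : ℕ) : ℤ) * m)) = f.coeff (7 * m)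
  norm_num

noncomputable def mul7 : ℤ →+ ℤ where
  toFun n := 7 * n
  map_zero' := by ring
  map_add' a b := by ring

noncomputable def E : LaurentSeries ℚ →+* LaurentSeries ℚ :=
  HahnSeries.embDomainRingHom mul7 (fun a b h => by
      simpa [mul7] using h)
    (fun g g' => by
      show 7 * g ≤ 7 * g' ↔ g ≤ g'
      omega)

lemma E_coeff_mul (x : LaurentSeries ℚ) (n : ℤ) : (E x).coeff (7 * n) = x.coeff n := by
  exact HahnSeries.embDomain_coeff (a := n)

lemma E_coeff_not (x : LaurentSeries ℚ) {n : ℤ} (hn : ¬ (7 ∣ n)) : (E x).coeff n = 0 := by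
  refine HahnSeries.embDomain_notin_range ?_
  rintro ⟨a, ha⟩
  exact hn ⟨a, (by simpa [mul7] using ha.symm)⟩

lemma E_dvd_of_ne {x : LaurentSeries ℚ} {n : ℤ} (h : (E x).coeff n ≠ 0) : 7 ∣ n := by
  by_contra hc
  exact h (E_coeff_not x hc)

lemma E_inv (x : LaurentSeries ℚ) : E x⁻¹ = (E x)⁻¹ := by
  rcases eq_or_ne x 0 with rfl | hx
  · simp
  · refine eq_inv_of_mul_eq_one_right ?_
    rw [← map_mul, mul_inv_cancel₀ hx, map_one]

lemma atkinU_mul_E (f g : LaurentSeries ℚ) : atkinU 7 (f * E g) = atkinU 7 f * g := by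
  ext m
  rw [atkinU_coeff, HahnSeries.coeff_mul, HahnSeries.coeff_mul]
  refine Finset.sum_nbij' (i := fun p => (p.1 / 7, p.2 / 7)) (j := fun p => (7 * p.1, 7 * p.2))
    ?_ ?_ ?_ ?_ ?_
  · intro p hp
    rw [Finset.mem_addAntidiagonal] at hp ⊢
    obtain ⟨h1, h2, h3⟩ := hp
    rw [HahnSeries.mem_support] at h1 h2
    have hd2 : 7 ∣ p.2 := E_dvd_of_ne h2
    have hd1 : 7 ∣ p.1 := by omega
    refine ⟨?_, ?_, by omega⟩
    · rw [HahnSeries.mem_support, atkinU_coeff]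
      have : 7 * (p.1 / 7) = p.1 := by omega
      rwa [this]
    · rw [HahnSeries.mem_support]
      have : (7 : ℤ) * (p.2 / 7) = p.2 := by omega
      rw [← E_coeff_mul g, this]
      exact h2
  · intro p hp
    rw [Finset.mem_addAntidiagonal] at hp ⊢
    obtain ⟨h1, h2, h3⟩ := hp
    rw [HahnSeries.mem_support] at h1 h2
    rw [HahnSeries.mem_support, HahnSeries.mem_support]
    rw [atkinU_coeff] at h1
    refine ⟨h1, ?_, by omega⟩
    rw [E_coeff_mul]
    exact h2
  · intro p hp
    dsimp only
    rw [Finset.mem_addAntidiagonal] at hp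
    obtain ⟨h1, h2, h3⟩ := hp
    rw [HahnSeries.mem_support] at h2
    have hd2 : 7 ∣ p.2 := E_dvd_of_ne h2
    have hd1 : 7 ∣ p.1 := by omega
    ext <;> simp <;> omega
  · intro p hp
    dsimp only
    ext <;> simp <;> omega
  · intro p hp
    dsimp only
    rw [Finset.mem_addAntidiagonal] at hp
    obtain ⟨h1, h2, h3⟩ := hp
    rw [HahnSeries.mem_support] at h2
    have hd2 : 7 ∣ p.2 := E_dvd_of_ne h2
    have hd1 : 7 ∣ p.1 := by omega
    rw [atkinU_coeff]
    have e1 : 7 * (p.1 / 7) = p.1 := by omega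
    have e2 : (7 : ℤ) * (p.2 / 7) = p.2 := by omega
    rw [e1, ← E_coeff_mul g, e2]

lemma coeff_cast (f : PowerSeries ℚ) (n : ℤ) :
    ((f : LaurentSeries ℚ)).coeff n = if 0 ≤ n then PowerSeries.coeff n.toNat f else 0 := by
  by_cases hn : 0 ≤ n
  · obtain ⟨m, rfl⟩ := Int.eq_ofNat_of_zero_le hn
    rw [if_pos hn]
    simpa using HahnSeries.ofPowerSeries_apply_coeff f m
  · rw [if_neg hn]
    rw [HahnSeries.ofPowerSeries_apply]
    refine HahnSeries.embDomain_notin_range ?_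
    rintro ⟨a, ha⟩
    simp only [Nat.castOrderEmbedding_apply] at ha
    omega

lemma JL_ne_zero {k : ℕ} (hk : 1 ≤ k) : JL k ≠ 0 := by
  intro h
  have h0 : (JL k).coeff 0 = 1 := by
    rw [JL, coeff_cast, if_pos le_rfl]
    simpa using coeff_J_zero hk
  rw [h] at h0
  simp at h0

lemma E_JL {k : ℕ} (hk : 1 ≤ k) : E (JL k) = JL (7 * k) := by
  ext n
  by_cases hd : (7 : ℤ) ∣ n
  · obtain ⟨m, rfl⟩ := hd
    rw [E_coeff_mul, JL, JL, coeff_cast, coeff_cast]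
    by_cases hm : 0 ≤ m
    · rw [if_pos hm, if_pos (by omega)]
      have ht : (7 * m).toNat = 7 * m.toNat := by omega
      rw [ht, coeff_J7_dvd hk]
    · rw [if_neg hm, if_neg (by omega)]
  · rw [E_coeff_not _ hd, JL, coeff_cast]
    by_cases hn : 0 ≤ n
    · rw [if_pos hn, coeff_J7_not_dvd hk]
      intro hc
      exact hd (by omega)
    · rw [if_neg hn]

lemma q_eq : q = HahnSeries.single (1 : ℤ) (1 : ℚ) := HahnSeries.ofPowerSeries_X

lemma q_ne_zero : q ≠ 0 := by
  intro h
  have : q.coeff 1 = 1 := by rw [q_eq]; simp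
  rw [h] at this
  simp at this

lemma q2_inv : (q ^ 2)⁻¹ = HahnSeries.single (-2 : ℤ) (1 : ℚ) := by
  refine inv_eq_of_mul_eq_one_right ?_
  rw [q_eq, HahnSeries.single_pow, HahnSeries.single_mul_single]
  norm_num

lemma atkinU_castA (b : ℕ → ℚ) :
    atkinU 7 (((PowerSeries.mk b : PowerSeries ℚ) : LaurentSeries ℚ) * (q ^ 2)⁻¹) =
      ((PowerSeries.mk fun n => b (7 * n + 2) : PowerSeries ℚ) : LaurentSeries ℚ) := by
  ext m
  rw [atkinU_coeff, q2_inv]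
  have h7 : (7 : ℤ) * m = (7 * m + 2) + (-2) := by ring
  rw [h7, HahnSeries.coeff_mul_single_add, mul_one, coeff_cast, coeff_cast]
  by_cases hm : 0 ≤ m
  · rw [if_pos (by omega), if_pos hm]
    have : (7 * m + 2).toNat = 7 * m.toNat + 2 := by omega
    rw [this]
    simp
  · rw [if_neg (by omega), if_neg hm]

/-- If `∑ a(n)qⁿ = (-q;q)_∞²/(q;q)_∞`, then
`L₁ := U₇(A) = (J₇³/J₁₄) ∑_{n≥0} a(7n+2) qⁿ`. -/
theorem L1_eq_gen_fun (a : ℕ → ℚ)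
    (ha : PowerSeries.mk a * J 1 = negqPochhammer ^ 2) :
    atkinU 7 A =
      (JL 7 ^ 3 / JL 14) *
        ((PowerSeries.mk fun n => a (7 * n + 2) : PowerSeries ℚ) : LaurentSeries ℚ) := by
  have h1 : PowerSeries.mk a * (J 1) ^ 3 = (J 2) ^ 2 := by
    calc PowerSeries.mk a * (J 1) ^ 3 = (PowerSeries.mk a * J 1) * (J 1) ^ 2 := by ring
    _ = negqPochhammer ^ 2 * (J 1) ^ 2 := by rw [ha]
    _ = (J 1 * negqPochhammer) ^ 2 := by ring
    _ = (J 2) ^ 2 := by rw [J1_mul_negq]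
  have h2 : ((PowerSeries.mk a : PowerSeries ℚ) : LaurentSeries ℚ) * JL 1 ^ 3 = JL 2 ^ 2 := by
    have := congrArg (HahnSeries.ofPowerSeries ℤ ℚ) h1
    simp only [map_mul, map_pow] at this
    exact this
  have e7 : E (JL 7) = JL 49 := by
    have := E_JL (k := 7) (by norm_num)
    norm_num at this
    exact this
  have e14 : E (JL 14) = JL 98 := by
    have := E_JL (k := 14) (by norm_num)
    norm_num at this
    exact this
  have hEG : E (JL 7 ^ 3 * (JL 14)⁻¹) = JL 49 ^ 3 * (JL 98)⁻¹ := by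
    rw [map_mul, map_pow, E_inv, e7, e14]
  have hq : q ≠ 0 := q_ne_zero
  have hJ1 : JL 1 ≠ 0 := JL_ne_zero (by norm_num)
  have hJ14 : JL 14 ≠ 0 := JL_ne_zero (by norm_num)
  have hJ98 : JL 98 ≠ 0 := JL_ne_zero (by norm_num)
  have hA : A = (((PowerSeries.mk a : PowerSeries ℚ) : LaurentSeries ℚ) * (q ^ 2)⁻¹) *
      E (JL 7 ^ 3 * (JL 14)⁻¹) := by
    rw [hEG, A, ← h2]
    field_simp
  rw [hA, atkinU_mul_E, atkinU_castA, div_eq_mul_inv]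
  ring
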